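/- Let p be a prime, let T = exp(S_p) \in ℚ⟦X⟧ and let t_p(n) denote the n-th coefficient of T. Then for every n \ge 0 the rational number t_p(n) lies in the localization ℤ_{(p)}; equivalently, the denominator of t_p(n) (in lowest terms) is a power of p, i.e., there exists k \ge 0 with den(t_p(n)) = p^k. -/

import Mathlib

open scoped BigOperators

/-- `S_p ∈ ℚ⟦X⟧`, the series with `n`-th coefficient `ν_p(n)/n` (and constant term `0`). -/
noncomputable def Sp (p : ℕ) : PowerSeries ℚ :=
  PowerSeries.mk fun n => (padicValNat p n : ℚ) / (n : ℚ)

/-- Substitution `f(g)` of a power series `g` with zero constant term into `f`: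
the `n`-th coefficient is `∑_{k ≤ n} (coeff k f) · (coeff n (g^k))`. -/
noncomputable def substPS (g f : PowerSeries ℚ) : PowerSeries ℚ :=
  PowerSeries.mk fun n =>
    ∑ k ∈ Finset.range (n + 1), PowerSeries.coeff k f * PowerSeries.coeff n (g ^ k)

/-- `T = exp(S_p)`, the substitution of `S_p` into the exponential power series. -/
noncomputable def Tps (p : ℕ) : PowerSeries ℚ :=
  substPS (Sp p) (PowerSeries.exp ℚ)

/-- `t_p(n)`, the `n`-th coefficient of `T = exp(S_p)`. -/
noncomputable def tp (p n : ℕ) : ℚ :=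
  PowerSeries.coeff n (Tps p)

open PowerSeries Finset

/-- the subring ℤ[1/p] of ℚ -/
def Ap (p : ℕ) : Subring ℚ where
  carrier := {x : ℚ | ∃ (a : ℤ) (k : ℕ), x * (p : ℚ) ^ k = (a : ℚ)}
  one_mem' := ⟨1, 0, by simp⟩
  zero_mem' := ⟨0, 0, by simp⟩
  add_mem' := by
    rintro x y ⟨a, k, ha⟩ ⟨b, l, hb⟩
    exact ⟨a * p ^ l + b * p ^ k, k + l, by push_cast; rw [pow_add]; linear_combination ((p:ℚ))^l * ha + ((p:ℚ))^k * hb⟩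
  mul_mem' := by
    rintro x y ⟨a, k, ha⟩ ⟨b, l, hb⟩
    exact ⟨a * b, k + l, by push_cast; rw [pow_add]; linear_combination (y * ((p:ℚ))^l) * ha + ((a:ℚ)) * hb⟩
  neg_mem' := by
    rintro x ⟨a, k, ha⟩
    exact ⟨-a, k, by push_cast; linarith [ha]⟩

lemma mem_Ap {p : ℕ} {x : ℚ} : x ∈ Ap p ↔ ∃ (a : ℤ) (k : ℕ), x * (p : ℚ) ^ k = (a : ℚ) :=
  Iff.rfl

lemma natCast_mem_Ap (p m : ℕ) : ((m : ℚ)) ∈ Ap p := ⟨m, 0, by simp⟩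

lemma inv_p_mem_Ap {p : ℕ} (hp : 0 < p) : ((p : ℚ))⁻¹ ∈ Ap p :=
  ⟨1, 1, by field_simp; simp⟩

lemma den_eq_pow_of_mem_Ap {p : ℕ} (hp : p.Prime) {x : ℚ} (hx : x ∈ Ap p) :
    ∃ k : ℕ, x.den = p ^ k := by
  obtain ⟨a, k, ha⟩ := hx
  have hpk : ((p : ℚ)) ^ k ≠ 0 := pow_ne_zero _ (Nat.cast_ne_zero.mpr hp.ne_zero)
  have hx' : x = Rat.divInt a ((p : ℤ) ^ k) := by
    rw [Rat.divInt_eq_div]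
    push_cast
    field_simp
    linarith [ha]
  have hdvd : (x.den : ℤ) ∣ (p : ℤ) ^ k := by
    rw [hx']; exact Rat.den_dvd a _
  have hdvd' : x.den ∣ p ^ k := by
    have := Int.natAbs_dvd_natAbs.mpr hdvd
    simpa [Int.natAbs_pow] using this
  obtain ⟨m, _, hm⟩ := (Nat.dvd_prime_pow hp).mp hdvd'
  exact ⟨m, hm⟩

lemma mulAp {p : ℕ} {f g : ℚ⟦X⟧} {n : ℕ}
    (hf : ∀ i ≤ n, PowerSeries.coeff i f ∈ Ap p)
    (hg : ∀ i ≤ n, PowerSeries.coeff i g ∈ Ap p) :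
    ∀ m ≤ n, PowerSeries.coeff m (f * g) ∈ Ap p := by
  intro m hm
  rw [PowerSeries.coeff_mul]
  refine Subring.sum_mem _ fun x hx => ?_
  rw [Finset.HasAntidiagonal.mem_antidiagonal] at hx
  exact mul_mem (hf _ (by omega)) (hg _ (by omega))

lemma powAp {p : ℕ} {f : ℚ⟦X⟧} (hf : ∀ i, PowerSeries.coeff i f ∈ Ap p) (k : ℕ) :
    ∀ i, PowerSeries.coeff i (f ^ k) ∈ Ap p := by
  induction k with
  | zero =>
      intro i
      rw [pow_zero, PowerSeries.coeff_one]
      split_ifs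
      · exact one_mem _
      · exact zero_mem _
  | succ k ihk =>
      intro i
      rw [pow_succ]
      exact mulAp (fun j _ => ihk j) (fun j _ => hf j) i le_rfl

lemma coeff_pow_congr {f g : ℚ⟦X⟧} {n : ℕ}
    (h : ∀ m ≤ n, PowerSeries.coeff m f = PowerSeries.coeff m g) (k : ℕ) :
    ∀ m ≤ n, PowerSeries.coeff m (f ^ k) = PowerSeries.coeff m (g ^ k) := by
  induction k with
  | zero => simp
  | succ k ihk =>
      intro m hm
      rw [pow_succ, pow_succ, PowerSeries.coeff_mul, PowerSeries.coeff_mul]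
      refine Finset.sum_congr rfl fun x hx => ?_
      rw [Finset.HasAntidiagonal.mem_antidiagonal] at hx
      rw [ihk _ (by omega), h _ (by omega)]

-- Sp lemmas
lemma constantCoeff_Sp (p : ℕ) : PowerSeries.constantCoeff (Sp p) = 0 := by
  rw [← PowerSeries.coeff_zero_eq_constantCoeff_apply]
  simp [Sp]

lemma coeff_dSp (p m : ℕ) :
    PowerSeries.coeff m (PowerSeries.derivative ℚ (Sp p)) = (padicValNat p (m + 1) : ℚ) := by
  rw [PowerSeries.coeff_derivative, Sp, PowerSeries.coeff_mk]
  have h : ((m : ℚ) + 1) ≠ 0 := by positivity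
  push_cast
  field_simp

lemma coeff_Sp_pow_eq_zero (p : ℕ) {k j : ℕ} (h : j < k) :
    PowerSeries.coeff j (Sp p ^ k) = 0 := by
  obtain ⟨g, hg⟩ := PowerSeries.X_dvd_iff.mpr (constantCoeff_Sp p)
  rw [hg, mul_pow, PowerSeries.coeff_X_pow_mul', if_neg (by omega)]

lemma coeff_Tps (p n : ℕ) :
    PowerSeries.coeff n (Tps p) =
      ∑ k ∈ Finset.range (n + 1), ((Nat.factorial k : ℚ))⁻¹ * PowerSeries.coeff n (Sp p ^ k) := by
  rw [Tps, substPS, PowerSeries.coeff_mk]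
  refine Finset.sum_congr rfl fun k _ => ?_
  rw [PowerSeries.coeff_exp]
  simp [one_div]

lemma coeff_Tps' (p : ℕ) {n N : ℕ} (h : n ≤ N) :
    PowerSeries.coeff n (Tps p) =
      ∑ k ∈ Finset.range (N + 1), ((Nat.factorial k : ℚ))⁻¹ * PowerSeries.coeff n (Sp p ^ k) := by
  rw [coeff_Tps]
  refine Finset.sum_subset (by intro k hk; simp only [Finset.mem_range] at *; omega) ?_
  intro k hk hk2
  simp only [Finset.mem_range] at hk hk2
  rw [coeff_Sp_pow_eq_zero p (by omega), mul_zero]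

lemma coeff_Tps_zero (p : ℕ) : PowerSeries.coeff 0 (Tps p) = 1 := by
  rw [coeff_Tps]
  simp

lemma deriv_Tps (p : ℕ) :
    PowerSeries.derivative ℚ (Tps p) = PowerSeries.derivative ℚ (Sp p) * Tps p := by
  ext n
  have hfac : ∀ k : ℕ, ((Nat.factorial (k+1) : ℚ))⁻¹ * ((k : ℚ) + 1) = ((Nat.factorial k : ℚ))⁻¹ := by
    intro k
    rw [Nat.factorial_succ]
    have h1 : ((Nat.factorial k : ℚ)) ≠ 0 := by exact_mod_cast (Nat.factorial_pos k).ne'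
    have h2 : ((k : ℚ) + 1) ≠ 0 := by positivity
    push_cast
    field_simp
  have lhs_eq : PowerSeries.coeff n (PowerSeries.derivative ℚ (Tps p)) =
      ∑ k ∈ Finset.range (n + 1),
        ((Nat.factorial k : ℚ))⁻¹ * PowerSeries.coeff n (Sp p ^ k * PowerSeries.derivative ℚ (Sp p)) := by
    rw [PowerSeries.coeff_derivative, coeff_Tps, Finset.sum_mul, Finset.sum_range_succ']
    have h0 : ((Nat.factorial 0 : ℚ))⁻¹ * PowerSeries.coeff (n+1) (Sp p ^ 0) * ((n : ℚ) + 1) = 0 := by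
      rw [pow_zero, PowerSeries.coeff_one, if_neg (by omega)]
      ring
    rw [h0, add_zero]
    refine Finset.sum_congr rfl fun k _ => ?_
    have hd : PowerSeries.coeff (n+1) (Sp p ^ (k+1)) * ((n : ℚ) + 1) =
        PowerSeries.coeff n (PowerSeries.derivative ℚ (Sp p ^ (k+1))) := by
      rw [PowerSeries.coeff_derivative]
    have hleib : PowerSeries.derivative ℚ (Sp p ^ (k+1)) =
        (k+1) • (Sp p ^ k * PowerSeries.derivative ℚ (Sp p)) := by
      rw [(PowerSeries.derivative ℚ).leibniz_pow (a := Sp p) (k+1)]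
      simp [smul_eq_mul]
    rw [mul_assoc, hd, hleib, map_nsmul]
    -- push_cast (noop)
    rw [nsmul_eq_mul]
    push_cast
    rw [← hfac k]
    ring
  rw [lhs_eq, PowerSeries.coeff_mul, Finset.Nat.sum_antidiagonal_eq_sum_range_succ_mk]
  have rhs_eq : ∀ i ∈ Finset.range (n+1),
      PowerSeries.coeff i (PowerSeries.derivative ℚ (Sp p)) * PowerSeries.coeff (n - i) (Tps p) =
      ∑ k ∈ Finset.range (n + 1), ((Nat.factorial k : ℚ))⁻¹ *
        (PowerSeries.coeff i (PowerSeries.derivative ℚ (Sp p)) * PowerSeries.coeff (n - i) (Sp p ^ k)) := by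
    intro i hi
    rw [coeff_Tps' p (show n - i ≤ n by omega), Finset.mul_sum]
    refine Finset.sum_congr rfl fun k _ => ?_
    ring
  rw [Finset.sum_congr rfl rhs_eq, Finset.sum_comm]
  refine Finset.sum_congr rfl fun k _ => ?_
  rw [← Finset.mul_sum]
  congr 1
  rw [mul_comm (Sp p ^ k), PowerSeries.coeff_mul, Finset.Nat.sum_antidiagonal_eq_sum_range_succ_mk]

noncomputable def cpw (p : ℕ) (f : ℚ⟦X⟧) : ℚ⟦X⟧ :=
  PowerSeries.mk fun n => if p ∣ n then PowerSeries.coeff (n / p) f else 0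

lemma coeff_cpw (p : ℕ) (f : ℚ⟦X⟧) (n : ℕ) :
    PowerSeries.coeff n (cpw p f) = if p ∣ n then PowerSeries.coeff (n / p) f else 0 :=
  PowerSeries.coeff_mk _ _

lemma cpw_mul {p : ℕ} (hp : 0 < p) (f g : ℚ⟦X⟧) :
    cpw p (f * g) = cpw p f * cpw p g := by
  ext n
  rw [coeff_cpw]
  conv_rhs => rw [PowerSeries.coeff_mul]
  simp_rw [coeff_cpw, ite_zero_mul_ite_zero]
  by_cases h : p ∣ n
  · obtain ⟨m, rfl⟩ := h
    rw [if_pos (Dvd.intro m rfl), Nat.mul_div_cancel_left m hp, PowerSeries.coeff_mul]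
    rw [← Finset.sum_filter]
    refine Finset.sum_nbij' (i := fun x => (p * x.1, p * x.2)) (j := fun y => (y.1 / p, y.2 / p))
      ?_ ?_ ?_ ?_ ?_
    · rintro ⟨a, b⟩ ha
      rw [Finset.HasAntidiagonal.mem_antidiagonal] at ha
      simp only [Finset.mem_filter, Finset.HasAntidiagonal.mem_antidiagonal]
      exact ⟨by rw [← Nat.mul_add, ha], ⟨a, rfl⟩, ⟨b, rfl⟩⟩
    · rintro ⟨a, b⟩ ha
      simp only [Finset.mem_filter, Finset.HasAntidiagonal.mem_antidiagonal] at ha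
      obtain ⟨hab, ⟨a', rfl⟩, ⟨b', rfl⟩⟩ := ha
      rw [Finset.HasAntidiagonal.mem_antidiagonal]
      simp only [Nat.mul_div_cancel_left _ hp]
      have := hab
      rw [← Nat.mul_add] at this
      exact Nat.eq_of_mul_eq_mul_left hp this
    · rintro ⟨a, b⟩ _
      simp [Nat.mul_div_cancel_left _ hp]
    · rintro ⟨a, b⟩ ha
      simp only [Finset.mem_filter, Finset.mem_antidiagonal] at ha
      obtain ⟨hab, ⟨a', rfl⟩, ⟨b', rfl⟩⟩ := ha
      simp [Nat.mul_div_cancel_left _ hp]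
    · rintro ⟨a, b⟩ _
      simp [Nat.mul_div_cancel_left _ hp]
  · rw [if_neg h]
    symm
    refine Finset.sum_eq_zero fun x hx => ?_
    rw [Finset.HasAntidiagonal.mem_antidiagonal] at hx
    rw [if_neg]
    rintro ⟨hi, hj⟩
    exact h (hx ▸ dvd_add hi hj)

lemma deriv_cpw {p : ℕ} (hp : 0 < p) (f : ℚ⟦X⟧) :
    PowerSeries.derivative ℚ (cpw p f) =
      ((p : ℚ⟦X⟧)) * (PowerSeries.X ^ (p - 1) * cpw p (PowerSeries.derivative ℚ f)) := by
  ext n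
  have hc : ((p : ℕ) : ℚ⟦X⟧) = PowerSeries.C ((p : ℕ) : ℚ) := by
    rw [map_natCast]
  rw [PowerSeries.coeff_derivative, coeff_cpw, hc, PowerSeries.coeff_C_mul,
    PowerSeries.coeff_X_pow_mul', coeff_cpw]
  by_cases h : p ∣ n + 1
  · obtain ⟨q, hq⟩ := h
    have hq0 : q ≠ 0 := by rintro rfl; simp at hq
    obtain ⟨r, rfl⟩ : ∃ r, q = r + 1 := ⟨q - 1, by omega⟩
    have hpr : n + 1 = p * r + p := by rw [hq]; ring
    set s := p * r with hs
    have hple : p - 1 ≤ n := by omega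
    have hsub : n - (p - 1) = s := by omega
    rw [if_pos ⟨r + 1, hq⟩, if_pos hple, hsub, if_pos ⟨r, rfl⟩]
    have h1 : (n + 1) / p = r + 1 := by rw [hq, Nat.mul_div_cancel_left _ hp]
    have h2 : s / p = r := by rw [hs, Nat.mul_div_cancel_left _ hp]
    rw [h1, h2, PowerSeries.coeff_derivative]
    have : ((n : ℚ) + 1) = (p : ℚ) * ((r : ℚ) + 1) := by
      have : ((n : ℚ) + 1) = ((n + 1 : ℕ) : ℚ) := by push_cast; ring
      rw [this, hq]; push_cast; ring
    rw [this]; ring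
  · rw [if_neg h]
    rw [zero_mul]
    symm
    by_cases hple : p - 1 ≤ n
    · rw [if_pos hple, if_neg, mul_zero]
      intro hd
      have : n + 1 = (n - (p - 1)) + p := by omega
      exact h (this ▸ dvd_add hd dvd_rfl)
    · rw [if_neg hple, mul_zero]

noncomputable def Geo (p : ℕ) : ℚ⟦X⟧ :=
  PowerSeries.mk fun n => if p ∣ n ∧ n ≠ 0 then 1 else 0

lemma coeff_W (p n : ℕ) :
    PowerSeries.coeff n (PowerSeries.X * PowerSeries.derivative ℚ (Sp p)) =
      (padicValNat p n : ℚ) := by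
  cases n with
  | zero =>
      rw [PowerSeries.coeff_zero_eq_constantCoeff_apply, map_mul]
      simp
  | succ m =>
      rw [PowerSeries.coeff_succ_X_mul, coeff_dSp]

lemma E1 {p : ℕ} (hp : p.Prime) :
    PowerSeries.X * PowerSeries.derivative ℚ (Sp p) =
      cpw p (PowerSeries.X * PowerSeries.derivative ℚ (Sp p)) + Geo p := by
  haveI : Fact p.Prime := ⟨hp⟩
  ext n
  rw [map_add, coeff_W, coeff_cpw, coeff_W, Geo, PowerSeries.coeff_mk]
  by_cases h : p ∣ n
  · rcases Nat.eq_zero_or_pos n with rfl | hn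
    · simp
    · rw [if_pos h, if_pos ⟨h, by omega⟩]
      have h1 : padicValNat p (n / p) = padicValNat p n - 1 := padicValNat.div h
      have h2 : 1 ≤ padicValNat p n := one_le_padicValNat_of_dvd (by omega) h
      have : padicValNat p (n / p) + 1 = padicValNat p n := by omega
      push_cast [← this]
      ring
  · rw [if_neg h, if_neg (by tauto), padicValNat.eq_zero_of_not_dvd h]
    simp

lemma E2 {p : ℕ} (hp : p.Prime) :
    Geo p * (1 - PowerSeries.X ^ p) = PowerSeries.X ^ p := by
  have hp0 : 0 < p := hp.pos
  ext n
  rw [mul_sub, mul_one, map_sub, PowerSeries.coeff_mul_X_pow', PowerSeries.coeff_X_pow]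
  simp only [Geo, PowerSeries.coeff_mk]
  by_cases h1 : p ∣ n
  · rcases Nat.eq_zero_or_pos n with rfl | hn
    · rw [if_neg (by tauto), if_neg (by omega), if_neg (by omega)]
      ring
    · have hpn : p ≤ n := Nat.le_of_dvd hn h1
      by_cases h3 : n = p
      · rw [if_pos ⟨h1, by omega⟩, if_pos hpn, if_pos h3,
          if_neg (show ¬(p ∣ n - p ∧ n - p ≠ 0) by rintro ⟨-, hne⟩; omega)]
        ring
      · have h4 : p ∣ n - p := Nat.dvd_sub h1 dvd_rfl
        rw [if_pos ⟨h1, by omega⟩, if_pos hpn, if_pos ⟨h4, by omega⟩, if_neg h3]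
        ring
  · rw [if_neg (show ¬(p ∣ n ∧ n ≠ 0) by tauto),
      if_neg (show n ≠ p by rintro rfl; exact h1 dvd_rfl)]
    by_cases h2 : p ≤ n
    · rw [if_pos h2, if_neg (show ¬(p ∣ n - p ∧ n - p ≠ 0) by
        rintro ⟨hd, -⟩
        refine h1 ?_
        have hnp : n = (n - p) + p := by omega
        rw [hnp]; exact dvd_add hd dvd_rfl)]
      ring
    · rw [if_neg h2]
      ring

lemma E3 {p : ℕ} (hp : p.Prime) :
    PowerSeries.X ^ p * cpw p (PowerSeries.derivative ℚ (Sp p)) =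
      cpw p (PowerSeries.X * PowerSeries.derivative ℚ (Sp p)) := by
  have hp0 : 0 < p := hp.pos
  ext n
  rw [PowerSeries.coeff_X_pow_mul', coeff_cpw, coeff_cpw, coeff_W]
  by_cases h : p ∣ n
  · rcases Nat.eq_zero_or_pos n with rfl | hn
    · rw [if_neg (by omega), if_pos h]
      simp
    · obtain ⟨m, rfl⟩ := h
      have hm : 1 ≤ m := by
        rcases Nat.eq_zero_or_pos m with rfl | h'
        · simp at hn
        · omega
      have hle : p ≤ p * m := Nat.le_mul_of_pos_right p hm
      have hsub : p * m - p = p * (m - 1) := by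
        rw [Nat.mul_sub, mul_one]
      rw [if_pos hle, hsub, if_pos ⟨m - 1, rfl⟩, if_pos ⟨m, rfl⟩,
        Nat.mul_div_cancel_left _ hp0, Nat.mul_div_cancel_left _ hp0, coeff_dSp]
      have hm1 : m - 1 + 1 = m := by omega
      rw [hm1]
  · rw [if_neg h]
    split_ifs with h2 h3
    · exfalso
      apply h
      have : n = (n - p) + p := by omega
      exact this ▸ dvd_add h3 dvd_rfl
    · rfl
    · rfl

lemma star_id {p : ℕ} (hp : p.Prime) :
    PowerSeries.derivative ℚ (Sp p) * (1 - PowerSeries.X ^ p) - PowerSeries.X ^ (p - 1) =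
      PowerSeries.X ^ (p - 1) * cpw p (PowerSeries.derivative ℚ (Sp p)) * (1 - PowerSeries.X ^ p) := by
  have hp0 : 0 < p := hp.pos
  have hX : (PowerSeries.X : ℚ⟦X⟧) ≠ 0 := PowerSeries.X_ne_zero
  apply mul_left_cancel₀ hX
  have hXp : (PowerSeries.X : ℚ⟦X⟧) * PowerSeries.X ^ (p - 1) = PowerSeries.X ^ p := by
    rw [← pow_succ']
    congr 1
    omega
  set dS := PowerSeries.derivative ℚ (Sp p)
  calc PowerSeries.X * (dS * (1 - PowerSeries.X ^ p) - PowerSeries.X ^ (p-1))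
      = (PowerSeries.X * dS) * (1 - PowerSeries.X ^ p) - PowerSeries.X * PowerSeries.X ^ (p-1) := by
        ring
    _ = (cpw p (PowerSeries.X * dS) + Geo p) * (1 - PowerSeries.X ^ p) - PowerSeries.X ^ p := by
        rw [← E1 hp, hXp]
    _ = cpw p (PowerSeries.X * dS) * (1 - PowerSeries.X ^ p) + (Geo p * (1 - PowerSeries.X ^ p) - PowerSeries.X ^ p) := by
        ring
    _ = cpw p (PowerSeries.X * dS) * (1 - PowerSeries.X ^ p) := by
        rw [E2 hp]; ring
    _ = (PowerSeries.X ^ p * cpw p dS) * (1 - PowerSeries.X ^ p) := by rw [E3 hp]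
    _ = PowerSeries.X * (PowerSeries.X ^ (p-1) * cpw p dS * (1 - PowerSeries.X ^ p)) := by
        rw [← hXp]; ring

lemma uniq_of_deriv {F G : ℚ⟦X⟧} (h0 : PowerSeries.coeff 0 F = 1)
    (h0' : PowerSeries.coeff 0 G = 1)
    (hD : PowerSeries.derivative ℚ F * G = PowerSeries.derivative ℚ G * F) : F = G := by
  ext n
  induction n using Nat.strong_induction_on with
  | _ n ih =>
    match n with
    | 0 => rw [h0, h0']
    | (m + 1) =>
      have hm := congrArg (PowerSeries.coeff m) hD
      rw [PowerSeries.coeff_mul, PowerSeries.coeff_mul,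
        Finset.Nat.sum_antidiagonal_eq_sum_range_succ_mk,
        Finset.Nat.sum_antidiagonal_eq_sum_range_succ_mk,
        Finset.sum_range_succ, Finset.sum_range_succ] at hm
      have he : ∑ i ∈ Finset.range m,
          PowerSeries.coeff i (PowerSeries.derivative ℚ F) * PowerSeries.coeff (m - i) G =
          ∑ i ∈ Finset.range m,
          PowerSeries.coeff i (PowerSeries.derivative ℚ G) * PowerSeries.coeff (m - i) F := by
        refine Finset.sum_congr rfl fun i hi => ?_
        rw [Finset.mem_range] at hi
        rw [PowerSeries.coeff_derivative, PowerSeries.coeff_derivative,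
          ih (i + 1) (by omega), ih (m - i) (by omega)]
      rw [he] at hm
      have hc := add_left_cancel hm
      rw [PowerSeries.coeff_derivative, PowerSeries.coeff_derivative, Nat.sub_self, h0, h0',
        mul_one, mul_one] at hc
      have hne : ((m : ℚ) + 1) ≠ 0 := by positivity
      exact mul_right_cancel₀ hne hc

lemma FE {p : ℕ} (hp : p.Prime) :
    Tps p ^ p * (1 - PowerSeries.X ^ p) = cpw p (Tps p) := by
  have hp0 : 0 < p := hp.pos
  have hT0 : PowerSeries.coeff 0 (Tps p) = 1 := coeff_Tps_zero p
  set dd := PowerSeries.derivative ℚ with hdd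
  have hdT : dd (Tps p) = dd (Sp p) * Tps p := deriv_Tps p
  have hXp1 : (PowerSeries.X : ℚ⟦X⟧) ^ (p - 1) * PowerSeries.X = PowerSeries.X ^ p := by
    rw [← pow_succ]
    congr 1
    omega
  -- derivative of X^p
  have hdXp : dd ((PowerSeries.X : ℚ⟦X⟧) ^ p) = (p : ℚ⟦X⟧) * PowerSeries.X ^ (p - 1) := by
    rw [hdd, (PowerSeries.derivative ℚ).leibniz_pow (a := PowerSeries.X) p]
    rw [PowerSeries.derivative_X]
    simp [nsmul_eq_mul]
  have hdTp : dd (Tps p ^ p) = (p : ℚ⟦X⟧) * (Tps p ^ p * dd (Sp p)) := by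
    rw [hdd, (PowerSeries.derivative ℚ).leibniz_pow (a := Tps p) p, ← hdd, hdT]
    rw [smul_eq_mul, nsmul_eq_mul]
    have hTp : Tps p ^ (p - 1) * Tps p = Tps p ^ p := by
      rw [← pow_succ]
      congr 1
      omega
    calc (p : ℚ⟦X⟧) * (Tps p ^ (p-1) * (dd (Sp p) * Tps p))
        = (p : ℚ⟦X⟧) * ((Tps p ^ (p-1) * Tps p) * dd (Sp p)) := by ring
      _ = (p : ℚ⟦X⟧) * (Tps p ^ p * dd (Sp p)) := by rw [hTp]
  -- derivative of F
  have hdF : dd (Tps p ^ p * (1 - PowerSeries.X ^ p)) =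
      (p : ℚ⟦X⟧) * (Tps p ^ p * (dd (Sp p) * (1 - PowerSeries.X ^ p) - PowerSeries.X ^ (p - 1))) := by
    rw [hdd, Derivation.leibniz, smul_eq_mul, smul_eq_mul, ← hdd]
    have hd1 : dd (1 - PowerSeries.X ^ p) = -((p : ℚ⟦X⟧) * PowerSeries.X ^ (p - 1)) := by
      rw [hdd, map_sub, ← hdd, hdXp]
      have : dd (1 : ℚ⟦X⟧) = 0 := by rw [hdd]; exact Derivation.map_one_eq_zero _
      rw [this]
      ring
    rw [hd1, hdTp]
    ring
  have hdG : dd (cpw p (Tps p)) =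
      (p : ℚ⟦X⟧) * (PowerSeries.X ^ (p - 1) * (cpw p (dd (Sp p)) * cpw p (Tps p))) := by
    rw [hdd, deriv_cpw hp0, ← hdd, hdT, cpw_mul hp0]
  apply uniq_of_deriv
  · rw [PowerSeries.coeff_zero_eq_constantCoeff_apply, map_mul, map_pow, map_sub, map_pow]
    rw [← PowerSeries.coeff_zero_eq_constantCoeff_apply (φ := Tps p), hT0]
    simp [PowerSeries.constantCoeff_X, hp.ne_zero, zero_pow hp.ne_zero]
  · rw [coeff_cpw, if_pos (dvd_zero p), Nat.zero_div, hT0]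
  · rw [hdF, hdG, star_id hp]
    ring

lemma R1 {p : ℕ} (hp : p.Prime) (n : ℕ) :
    PowerSeries.coeff n (Tps p ^ p) =
      (if p ≤ n then PowerSeries.coeff (n - p) (Tps p ^ p) else 0) +
      (if p ∣ n then PowerSeries.coeff (n / p) (Tps p) else 0) := by
  have h := congrArg (PowerSeries.coeff n) (FE hp)
  rw [mul_sub, mul_one, map_sub, PowerSeries.coeff_mul_X_pow', coeff_cpw] at h
  linarith [h]

lemma mainAp {p : ℕ} (hp : p.Prime) : ∀ n, PowerSeries.coeff n (Tps p) ∈ Ap p := by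
  intro n
  induction n using Nat.strong_induction_on with
  | _ n ih =>
  rcases Nat.eq_zero_or_pos n with rfl | hn
  · rw [coeff_Tps_zero]; exact one_mem _
  have hp2 : 2 ≤ p := hp.two_le
  have cA : ∀ m, m ≤ n → PowerSeries.coeff m (Tps p ^ p) ∈ Ap p := by
    intro m
    induction m using Nat.strong_induction_on with
    | _ m ihm =>
    intro hmn
    rw [R1 hp m]
    refine add_mem ?_ ?_
    · split_ifs with h
      · exact ihm (m - p) (by omega) (by omega)
      · exact zero_mem _
    · split_ifs with h
      · rcases Nat.eq_zero_or_pos m with rfl | hm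
        · rw [Nat.zero_div, coeff_Tps_zero]; exact one_mem _
        · exact ih (m / p) (lt_of_lt_of_le (Nat.div_lt_self hm (by omega)) hmn)
      · exact zero_mem _
  set t := PowerSeries.coeff n (Tps p) with ht
  set U : ℚ⟦X⟧ := PowerSeries.mk fun m => if m < n then PowerSeries.coeff m (Tps p) else 0
    with hU
  have hUA : ∀ i, PowerSeries.coeff i U ∈ Ap p := by
    intro i
    rw [hU, PowerSeries.coeff_mk]
    split_ifs with h
    · exact ih i h
    · exact zero_mem _
  have hU0 : PowerSeries.constantCoeff U = 1 := by
    rw [← PowerSeries.coeff_zero_eq_constantCoeff_apply, hU, PowerSeries.coeff_mk, if_pos hn,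
      coeff_Tps_zero]
  have hagree : ∀ m ≤ n, PowerSeries.coeff m (Tps p) =
      PowerSeries.coeff m (U + PowerSeries.C t * PowerSeries.X ^ n) := by
    intro m hm
    rw [map_add, PowerSeries.coeff_C_mul_X_pow, hU, PowerSeries.coeff_mk]
    rcases lt_or_eq_of_le hm with h | h
    · rw [if_pos h, if_neg (by omega), add_zero]
    · rw [if_neg (by omega), if_pos h, zero_add, ht, h]
  have hcn : PowerSeries.coeff n (Tps p ^ p) =
      PowerSeries.coeff n ((U + PowerSeries.C t * PowerSeries.X ^ n) ^ p) :=
    coeff_pow_congr hagree p n le_rfl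
  rw [add_pow, map_sum] at hcn
  have hterm : ∀ k, PowerSeries.coeff n
      (U ^ k * (PowerSeries.C t * PowerSeries.X ^ n) ^ (p - k) * ((p.choose k : ℕ) : ℚ⟦X⟧)) =
      ((p.choose k : ℕ) : ℚ) * t ^ (p - k) *
        (if n * (p - k) ≤ n then PowerSeries.coeff (n - n * (p - k)) (U ^ k) else 0) := by
    intro k
    have h1 : (PowerSeries.C t * PowerSeries.X ^ n) ^ (p - k) =
        PowerSeries.C (t ^ (p - k)) * PowerSeries.X ^ (n * (p - k)) := by
      rw [mul_pow, ← map_pow, ← pow_mul]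
    have h2 : ((p.choose k : ℕ) : ℚ⟦X⟧) = PowerSeries.C ((p.choose k : ℕ) : ℚ) :=
      (map_natCast _ _).symm
    rw [h1, h2]
    have h3 : U ^ k * (PowerSeries.C (t ^ (p - k)) * PowerSeries.X ^ (n * (p - k))) *
        PowerSeries.C ((p.choose k : ℕ) : ℚ) =
        PowerSeries.C (((p.choose k : ℕ) : ℚ) * t ^ (p - k)) * (U ^ k * PowerSeries.X ^ (n * (p - k))) := by
      rw [map_mul]
      ring
    rw [h3, PowerSeries.coeff_C_mul, PowerSeries.coeff_mul_X_pow', mul_assoc]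
  rw [Finset.sum_congr rfl (fun k _ => hterm k)] at hcn
  rw [Finset.sum_eq_add (p - 1) p (by omega)
      (fun k hk hkn => ?_) (fun hk => absurd (Finset.mem_range.mpr (by omega)) hk)
      (fun hk => absurd (Finset.mem_range.mpr (by omega)) hk)] at hcn
  swap
  · -- k ≠ p-1, k ≠ p, k ∈ range (p+1): term is zero
    rw [Finset.mem_range] at hk
    have hge : 2 ≤ p - k := by omega
    rw [if_neg (by nlinarith [hn, hge])]
    ring
  · -- conclude
    have hA : PowerSeries.coeff (n - n * (p - (p-1))) (U ^ (p-1)) = 1 := by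
      have hppm : p - (p - 1) = 1 := by omega
      rw [hppm, mul_one, Nat.sub_self, PowerSeries.coeff_zero_eq_constantCoeff_apply, map_pow, hU0,
        one_pow]
    have hch : (p.choose (p - 1) : ℕ) = p := by
      have := Nat.choose_symm (show p - 1 ≤ p by omega) (n := p)
      have hpp : p - (p - 1) = 1 := by omega
      rw [hpp] at this
      rw [← this, Nat.choose_one_right]
    have hppm : p - (p - 1) = 1 := by omega
    rw [if_pos (by rw [hppm]; omega), hA, hch, hppm, pow_one, mul_one] at hcn
    rw [Nat.sub_self, pow_zero, mul_one, if_pos (by omega), Nat.mul_zero, Nat.sub_zero,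
      Nat.choose_self, Nat.cast_one, one_mul] at hcn
    -- hcn : coeff n (T^p) = p * t + coeff n (U^p)
    have hpne : ((p : ℕ) : ℚ) ≠ 0 := Nat.cast_ne_zero.mpr hp.ne_zero
    have hsolve : t = ((p : ℕ) : ℚ)⁻¹ *
        (PowerSeries.coeff n (Tps p ^ p) - PowerSeries.coeff n (U ^ p)) := by
      field_simp
      linarith [hcn]
    rw [hsolve]
    exact mul_mem (inv_p_mem_Ap hp.pos)
      (sub_mem (cA n le_rfl) (powAp hUA p n))

theorem stmt_10 (p : ℕ) (hp : p.Prime) (n : ℕ) :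
    ∃ k : ℕ, (tp p n).den = p ^ k :=
  den_eq_pow_of_mem_Ap hp (mainAp hp n)
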